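/- arXiv:2508.04521 — 2 statements merged into one kernel-verified Lean document; each statement's English description precedes it below -/
import Mathlib

section
/- For any c ∈ ℝ, the orbit of the vector (1,0) under the dual action h ↦ h⁻ᵀ of the shearlet group H_sh^c on ℝ² equals ℝ* × ℝ = { (x,y) : x ≠ 0 }. -/
/-!
`w = h⁻ᵀ e₁` iff `hᵀ w = e₁`. For `h = ε [[a, b], [0, a ^ c]]` this is the pair of equations
`ε a w₀ = 1` and `b w₀ + a ^ c w₁ = 0`, solvable with `a > 0` exactly when `w₀ ≠ 0`:
take `ε = sign w₀`, `a = |w₀|⁻¹` and `b = -a ^ c w₁ / w₀`.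
-/

open Matrix

theorem Matrix.GeneralLinearGroup.transpose_inv_mulVec_eq_iff {n R : Type*} [Fintype n]
    [DecidableEq n] [CommRing R] (h : GL n R) (v w : n → R) :
    (↑h⁻¹ : Matrix n n R)ᵀ *ᵥ v = w ↔ (h : Matrix n n R)ᵀ *ᵥ w = v := by
  constructor
  · rintro rfl
    rw [mulVec_mulVec, ← transpose_mul, h.inv_mul, transpose_one, one_mulVec]
  · rintro rfl
    rw [mulVec_mulVec, ← transpose_mul, h.mul_inv, transpose_one, one_mulVec]

theorem Matrix.transpose_smul_upperTriangular_mulVec {R : Type*} [CommRing R]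
    (ε a b d : R) (w : Fin 2 → R) :
    (ε • !![a, b; 0, d])ᵀ *ᵥ w = ![ε * a * w 0, ε * (b * w 0 + d * w 1)] := by
  ext i
  fin_cases i <;> simp [mulVec, dotProduct, Fin.sum_univ_two]; ring

theorem Matrix.det_smul_upperTriangular {R : Type*} [CommRing R] (ε a b d : R) :
    (ε • !![a, b; 0, d]).det = ε ^ 2 * (a * d) := by
  simp [det_fin_two_of]
  ring

theorem exists_shearlet_transpose_mulVec_eq (c : ℝ) {w : Fin 2 → ℝ} (hw : w 0 ≠ 0) :
    ∃ a b ε : ℝ, a > 0 ∧ (ε = 1 ∨ ε = -1) ∧ (ε • !![a, b; 0, a ^ c])ᵀ *ᵥ w = ![1, 0] := by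
  set ε := Real.sign (w 0)
  set a := (ε * w 0)⁻¹
  have hεw : 0 < ε * w 0 := Real.sign_mul_pos_of_ne_zero _ hw
  refine ⟨a, -(a ^ c * w 1) / w 0, ε, inv_pos.mpr hεw,
    (Real.sign_apply_eq_of_ne_zero _ hw).symm, ?_⟩
  rw [transpose_smul_upperTriangular_mulVec]
  congr 2
  · rw [mul_comm ε, mul_assoc, inv_mul_cancel₀ hεw.ne']
  · field_simp
    ring

theorem shearlet_dual_orbit (c : ℝ) :
    {w : Fin 2 → ℝ | ∃ h : GL (Fin 2) ℝ,
        (∃ (a b ε : ℝ), a > 0 ∧ (ε = 1 ∨ ε = -1) ∧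
          (h : Matrix (Fin 2) (Fin 2) ℝ) = ε • !![a, b; 0, a ^ c]) ∧
        (↑(h⁻¹) : Matrix (Fin 2) (Fin 2) ℝ)ᵀ *ᵥ ![1, 0] = w}
      = {w : Fin 2 → ℝ | w 0 ≠ 0} := by
  ext w
  simp only [Set.mem_ofPred_eq, GeneralLinearGroup.transpose_inv_mulVec_eq_iff]
  constructor
  · rintro ⟨h, ⟨a, b, ε, -, -, hh⟩, hw⟩ hw0
    rw [hh, transpose_smul_upperTriangular_mulVec, hw0] at hw
    simpa using congrFun hw 0
  · intro hw
    obtain ⟨a, b, ε, ha, hε, hεw⟩ := exists_shearlet_transpose_mulVec_eq c hw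
    have hdet : (ε • !![a, b; 0, a ^ c]).det ≠ 0 := by
      have hε0 : ε ≠ 0 := by rcases hε with rfl | rfl <;> norm_num
      rw [det_smul_upperTriangular]
      positivity
    exact ⟨.mkOfDetNeZero _ hdet, ⟨a, b, ε, ha, hε, rfl⟩, hεw⟩
end

section
/- For every c ∈ ℝ, every invertible upper triangular matrix normalizes the shearlet group H_sh^c: if A = [[r,s],[0,t]] with rt ≠ 0, then A H_sh^c A⁻¹ = H_sh^c. -/
/-!
Conjugation by an invertible upper triangular matrix `A = !![r, s; 0, t]` keeps the diagonal of
an upper triangular matrix and only moves its corner entry: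
`A * !![x, y; 0, z] * A⁻¹ = !![x, (r * y + s * z - s * x) / t; 0, z]`.
So conjugation by `A` maps `H_sh^c` into itself, and as `A⁻¹` is again upper triangular, onto itself.
-/

open Matrix

lemma Set.image_conj_eq_of_forall_conj_mem {G : Type*} [Group G] {S : Set G} {g : G}
    (hg : ∀ h ∈ S, g * h * g⁻¹ ∈ S) (hg_inv : ∀ h ∈ S, g⁻¹ * h * g⁻¹⁻¹ ∈ S) :
    (fun h => g * h * g⁻¹) '' S = S := by
  refine (Set.image_subset_iff.mpr hg).antisymm fun h hh => ⟨g⁻¹ * h * g, ?_, by group⟩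
  simpa using hg_inv h hh

section UpperTriangular

variable {K : Type*} [Field K]

lemma Matrix.upperTriangular_fin_two_mul_inv {r t : K} (s : K) (hr : r ≠ 0) (ht : t ≠ 0) :
    !![r, s; 0, t] * !![r⁻¹, -s / (r * t); 0, t⁻¹] = 1 := by
  rw [mul_fin_two, one_fin_two, EmbeddingLike.apply_eq_iff_eq]
  simp only [vecCons_inj, and_true]
  refine ⟨⟨?_, ?_⟩, ?_, ?_⟩ <;> field_simp <;> ring

lemma Matrix.upperTriangular_fin_two_conj {r t : K} (s x y z : K) (hr : r ≠ 0) (ht : t ≠ 0) :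
    !![r, s; 0, t] * !![x, y; 0, z] * !![r⁻¹, -s / (r * t); 0, t⁻¹]
      = !![x, (r * y + s * z - s * x) / t; 0, z] := by
  rw [mul_fin_two, mul_fin_two, EmbeddingLike.apply_eq_iff_eq]
  simp only [vecCons_inj, and_true]
  refine ⟨⟨?_, ?_⟩, ?_, ?_⟩ <;> field_simp <;> ring

def upperTriangularUnits (K : Type*) [Field K] : Set (GL (Fin 2) K) :=
  {A | ∃ r s t : K, r * t ≠ 0 ∧ (A : Matrix (Fin 2) (Fin 2) K) = !![r, s; 0, t]}

lemma coe_inv_of_coe_eq_upperTriangular {A : GL (Fin 2) K} {r s t : K} (hrt : r * t ≠ 0)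
    (hA : (A : Matrix (Fin 2) (Fin 2) K) = !![r, s; 0, t]) :
    ((A⁻¹ : GL (Fin 2) K) : Matrix (Fin 2) (Fin 2) K) = !![r⁻¹, -s / (r * t); 0, t⁻¹] := by
  apply Units.inv_eq_of_mul_eq_one_right
  rw [hA]
  exact upperTriangular_fin_two_mul_inv s (left_ne_zero_of_mul hrt) (right_ne_zero_of_mul hrt)

lemma inv_mem_upperTriangularUnits {A : GL (Fin 2) K} (hA : A ∈ upperTriangularUnits K) :
    A⁻¹ ∈ upperTriangularUnits K := by
  obtain ⟨r, s, t, hrt, hA⟩ := hA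
  exact ⟨r⁻¹, -s / (r * t), t⁻¹, by simpa [mul_inv] using hrt,
    coe_inv_of_coe_eq_upperTriangular hrt hA⟩

end UpperTriangular

def shearletGroup (c : ℝ) : Set (GL (Fin 2) ℝ) :=
  {h | ∃ (a b ε : ℝ), a > 0 ∧ (ε = 1 ∨ ε = -1) ∧
    (h : Matrix (Fin 2) (Fin 2) ℝ) = ε • !![a, b; 0, a ^ c]}

lemma conj_mem_shearletGroup {c : ℝ} {A h : GL (Fin 2) ℝ} (hA : A ∈ upperTriangularUnits ℝ)
    (hh : h ∈ shearletGroup c) : A * h * A⁻¹ ∈ shearletGroup c := by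
  obtain ⟨r, s, t, hrt, hA⟩ := hA
  obtain ⟨a, b, ε, ha, hε, hh⟩ := hh
  refine ⟨a, (r * b + s * a ^ c - s * a) / t, ε, ha, hε, ?_⟩
  rw [Units.val_mul, Units.val_mul, hh, coe_inv_of_coe_eq_upperTriangular hrt hA, hA,
    mul_smul_comm, smul_mul_assoc,
    upperTriangular_fin_two_conj s a b _ (left_ne_zero_of_mul hrt) (right_ne_zero_of_mul hrt)]

theorem upper_triangular_normalizes_shearlet (c : ℝ) (A : GL (Fin 2) ℝ)
    (hA : ∃ r s t : ℝ, r * t ≠ 0 ∧ (A : Matrix (Fin 2) (Fin 2) ℝ) = !![r, s; 0, t]) :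
    (fun h => A * h * A⁻¹) ''
        {h : GL (Fin 2) ℝ | ∃ (a b ε : ℝ), a > 0 ∧ (ε = 1 ∨ ε = -1) ∧
          (h : Matrix (Fin 2) (Fin 2) ℝ) = ε • !![a, b; 0, a ^ c]}
      = {h : GL (Fin 2) ℝ | ∃ (a b ε : ℝ), a > 0 ∧ (ε = 1 ∨ ε = -1) ∧
          (h : Matrix (Fin 2) (Fin 2) ℝ) = ε • !![a, b; 0, a ^ c]} :=
  Set.image_conj_eq_of_forall_conj_mem (S := shearletGroup c)
    (fun _ => conj_mem_shearletGroup hA)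
    (fun _ => conj_mem_shearletGroup (inv_mem_upperTriangularUnits hA))
end
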